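/- arXiv:2401.11741 — 2 statements merged into one kernel-verified Lean document; each statement's English description precedes it below -/
import Mathlib

section
/- Let n ≥ 1 and let S_n be the star graph on vertices {0,1,...,n-1}. The number of partial strong endomorphisms of S_n equals 2n^{n-1} + n·2^{n-1} − 1. -/
def pmul {V : Type*} (f g : V → Option V) : V → Option V := fun x => (f x).bind g

def pdom {V : Type*} (f : V → Option V) : Set V := {x | f x ≠ none}

def pim {V : Type*} (f : V → Option V) : Set V := {y | ∃ x, f x = some y}

def pker {V : Type*} (f : V → Option V) : V → V → Prop := fun x y => f x ≠ none ∧ f x = f y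

def PInj {V : Type*} (f : V → Option V) : Prop := ∀ u v a, f u = some a → f v = some a → u = v

def edge {n : ℕ} (u v : Fin n) : Prop := (u.val = 0 ∧ v.val ≠ 0) ∨ (v.val = 0 ∧ u.val ≠ 0)

def IsPEnd {n : ℕ} (α : Fin n → Option (Fin n)) : Prop :=
  ∀ u v a b, α u = some a → α v = some b → edge u v → edge a b

def IsPwEnd {n : ℕ} (α : Fin n → Option (Fin n)) : Prop :=
  ∀ u v a b, α u = some a → α v = some b → edge u v → a ≠ b → edge a b

def IsPsEnd {n : ℕ} (α : Fin n → Option (Fin n)) : Prop :=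
  ∀ u v a b, α u = some a → α v = some b → (edge u v ↔ edge a b)

def IsPswEnd {n : ℕ} (α : Fin n → Option (Fin n)) : Prop :=
  ∀ u v a b, α u = some a → α v = some b → ((edge u v ∧ a ≠ b) ↔ edge a b)

def PEndS (n : ℕ) : Set (Fin n → Option (Fin n)) := {α | IsPEnd α}
def PwEndS (n : ℕ) : Set (Fin n → Option (Fin n)) := {α | IsPwEnd α}
def PsEndS (n : ℕ) : Set (Fin n → Option (Fin n)) := {α | IsPsEnd α}
def PswEndS (n : ℕ) : Set (Fin n → Option (Fin n)) := {α | IsPswEnd α}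
def IEndS (n : ℕ) : Set (Fin n → Option (Fin n)) := {α | PInj α ∧ IsPEnd α}
def PAutS (n : ℕ) : Set (Fin n → Option (Fin n)) := {α | PInj α ∧ IsPsEnd α}

def RegularIn {V : Type*} (M : Set (V → Option V)) (a : V → Option V) : Prop :=
  ∃ b ∈ M, pmul (pmul a b) a = a

def GreenL {V : Type*} (M : Set (V → Option V)) (a b : V → Option V) : Prop :=
  (∃ g ∈ M, a = pmul g b) ∧ (∃ g ∈ M, b = pmul g a)

def GreenR {V : Type*} (M : Set (V → Option V)) (a b : V → Option V) : Prop :=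
  (∃ g ∈ M, a = pmul b g) ∧ (∃ g ∈ M, b = pmul a g)

def GreenH {V : Type*} (M : Set (V → Option V)) (a b : V → Option V) : Prop :=
  GreenL M a b ∧ GreenR M a b

def GreenJ {V : Type*} (M : Set (V → Option V)) (a b : V → Option V) : Prop :=
  (∃ g ∈ M, ∃ h ∈ M, a = pmul (pmul g b) h) ∧ (∃ g ∈ M, ∃ h ∈ M, b = pmul (pmul g a) h)

section Star
variable {n : ℕ}
def zc (hn : 1 ≤ n) : Fin n := ⟨0, hn⟩
lemma eq_zc_iff (hn : 1 ≤ n) (u : Fin n) : u = zc hn ↔ u.val = 0 := by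
  simp [zc, Fin.ext_iff]
lemma edge_iff' (hn : 1 ≤ n) (u v : Fin n) :
    edge u v ↔ ((u = zc hn ∧ v ≠ zc hn) ∨ (v = zc hn ∧ u ≠ zc hn)) := by
  simp [edge, eq_zc_iff]
def Phi (hn : 1 ≤ n) (f : {u : Fin n // u ≠ zc hn} → Fin n) : Fin n → Option (Fin n) :=
  fun u => if h : u = zc hn then some (zc hn) else
    if f ⟨u, h⟩ = zc hn then none else some (f ⟨u, h⟩)
def Psi (hn : 1 ≤ n) (p : {a : Fin n // a ≠ zc hn} × ({u : Fin n // u ≠ zc hn} → Bool)) :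
    Fin n → Option (Fin n) :=
  fun u => if h : u = zc hn then some p.1.val else
    if p.2 ⟨u, h⟩ then some (zc hn) else none
def Th (hn : 1 ≤ n) (f : {u : Fin n // u ≠ zc hn} → Bool) : Fin n → Option (Fin n) :=
  fun u => if h : u = zc hn then none else if f ⟨u, h⟩ then some (zc hn) else none
def Xi (hn : 1 ≤ n) (f : {u : Fin n // u ≠ zc hn} → Fin n) : Fin n → Option (Fin n) :=
  fun u => if h : u = zc hn then none else
    if f ⟨u, h⟩ = zc hn then none else some (f ⟨u, h⟩)

lemma Phi_inj (hn : 1 ≤ n) : Function.Injective (Phi hn) := by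
  intro f g hfg
  funext u
  have h := congrFun hfg u.1
  simp only [Phi, dif_neg u.2] at h
  split_ifs at h with h1 h2 <;> simp_all

lemma Psi_inj (hn : 1 ≤ n) : Function.Injective (Psi hn) := by
  intro p q hfg
  have h0 := congrFun hfg (zc hn)
  simp only [Psi, dif_pos rfl] at h0
  have h1 : p.1 = q.1 := Subtype.ext (by injection h0)
  have h2 : p.2 = q.2 := by
    funext u
    have h := congrFun hfg u.1
    simp only [Psi, dif_neg u.2] at h
    split_ifs at h with ha hb <;> simp_all
  exact Prod.ext h1 h2

lemma Th_inj (hn : 1 ≤ n) : Function.Injective (Th hn) := by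
  intro f g hfg
  funext u
  have h := congrFun hfg u.1
  simp only [Th, dif_neg u.2] at h
  split_ifs at h with h1 h2 <;> simp_all

lemma Xi_inj (hn : 1 ≤ n) : Function.Injective (Xi hn) := by
  intro f g hfg
  funext u
  have h := congrFun hfg u.1
  simp only [Xi, dif_neg u.2] at h
  split_ifs at h with h1 h2 <;> simp_all

lemma psEnd_of_iff (hn : 1 ≤ n) (α : Fin n → Option (Fin n))
    (H : ∀ u a, α u = some a → ((u = zc hn) ↔ (a = zc hn))) : IsPsEnd α := by
  intro u v a b hu hv
  have h1 := H u a hu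
  have h2 := H v b hv
  rw [edge_iff' hn u v, edge_iff' hn a b]
  tauto

lemma psEnd_of_anti (hn : 1 ≤ n) (α : Fin n → Option (Fin n))
    (H : ∀ u a, α u = some a → ((u = zc hn) ↔ ¬(a = zc hn))) : IsPsEnd α := by
  intro u v a b hu hv
  have h1 := H u a hu
  have h2 := H v b hv
  rw [edge_iff' hn u v, edge_iff' hn a b]
  tauto

lemma psEnd_of_leaf (hn : 1 ≤ n) (α : Fin n → Option (Fin n))
    (H0 : α (zc hn) = none)
    (H : (∀ u a, α u = some a → a = zc hn) ∨ (∀ u a, α u = some a → a ≠ zc hn)) :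
    IsPsEnd α := by
  intro u v a b hu hv
  have hu' : u ≠ zc hn := fun h => by rw [h, H0] at hu; cases hu
  have hv' : v ≠ zc hn := fun h => by rw [h, H0] at hv; cases hv
  rw [edge_iff' hn u v, edge_iff' hn a b]
  rcases H with H | H
  · have h1 := H u a hu
    have h2 := H v b hv
    tauto
  · have h1 := H u a hu
    have h2 := H v b hv
    tauto

lemma Phi_mem (hn : 1 ≤ n) (f : {u : Fin n // u ≠ zc hn} → Fin n) :
    Phi hn f ∈ PsEndS n := by
  apply psEnd_of_iff hn
  intro u a hu
  by_cases h : u = zc hn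
  · simp only [Phi, dif_pos h] at hu
    injection hu with hu
    simp [h, ← hu]
  · simp only [Phi, dif_neg h] at hu
    split_ifs at hu with h2
    rw [← Option.some_inj.mp hu]
    exact iff_of_false h h2

lemma Psi_mem (hn : 1 ≤ n) (p : {a : Fin n // a ≠ zc hn} × ({u : Fin n // u ≠ zc hn} → Bool)) :
    Psi hn p ∈ PsEndS n := by
  apply psEnd_of_anti hn
  intro u a hu
  by_cases h : u = zc hn
  · simp only [Psi, dif_pos h] at hu
    rw [← Option.some_inj.mp hu]
    simp [h]
    exact p.1.2
  · simp only [Psi, dif_neg h] at hu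
    split_ifs at hu with h2
    rw [← Option.some_inj.mp hu]
    simp [h]

lemma Th_mem (hn : 1 ≤ n) (f : {u : Fin n // u ≠ zc hn} → Bool) :
    Th hn f ∈ PsEndS n := by
  apply psEnd_of_leaf hn _ (by simp [Th])
  left
  intro u a hu
  simp only [Th] at hu
  split_ifs at hu with h1 h2
  exact (Option.some_inj.mp hu).symm

lemma Xi_mem (hn : 1 ≤ n) (f : {u : Fin n // u ≠ zc hn} → Fin n) :
    Xi hn f ∈ PsEndS n := by
  apply psEnd_of_leaf hn _ (by simp [Xi])
  right
  intro u a hu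
  simp only [Xi] at hu
  split_ifs at hu with h1 h2
  rw [← Option.some_inj.mp hu]
  exact h2

end Star

section Star2
variable {n : ℕ}

lemma cover (hn : 1 ≤ n) :
    PsEndS n ⊆ (Set.range (Phi hn) ∪ Set.range (Psi hn)) ∪
      (Set.range (Th hn) ∪ Set.range (Xi hn)) := by
  intro α hα
  have hα' : IsPsEnd α := hα
  rcases h0 : α (zc hn) with _ | a
  · by_cases hex : ∃ u b, α u = some b ∧ b ≠ zc hn
    · right; right
      obtain ⟨u0, b0, hu0, hb0⟩ := hex
      have hu0z : u0 ≠ zc hn := fun h => by rw [h, h0] at hu0; cases hu0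
      have hall : ∀ u b, α u = some b → b ≠ zc hn := by
        intro u b hub
        have huz : u ≠ zc hn := fun h => by rw [h, h0] at hub; cases hub
        by_cases huu : u = u0
        · have hbb : b = b0 := by
            rw [huu] at hub
            exact Option.some_inj.mp (hub.symm.trans hu0)
          rw [hbb]; exact hb0
        · have hiff := hα' u0 u b0 b hu0 hub
          have hne : ¬ edge u0 u := by
            rw [edge_iff' hn]; tauto
          have hne2 : ¬ edge b0 b := fun h => hne (hiff.mpr h)
          rw [edge_iff' hn] at hne2
          tauto
      refine ⟨fun u => (α u.1).getD (zc hn), ?_⟩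
      funext u
      by_cases h : u = zc hn
      · simp [Xi, h, h0]
      · rcases hu : α u with _ | b
        · simp [Xi, dif_neg h, hu]
        · have hb := hall u b hu
          simp [Xi, dif_neg h, hu, hb]
    · right; left
      push_neg at hex
      refine ⟨fun u => (α u.1).isSome, ?_⟩
      funext u
      by_cases h : u = zc hn
      · simp [Th, h, h0]
      · rcases hu : α u with _ | b
        · simp [Th, dif_neg h, hu]
        · have hb := hex u b hu
          simp [Th, dif_neg h, hu, hb]
  · by_cases ha : a = zc hn
    · left; left
      subst ha
      have hall : ∀ u b, u ≠ zc hn → α u = some b → b ≠ zc hn := by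
        intro u b hu hub
        have hiff := hα' (zc hn) u (zc hn) b h0 hub
        have he : edge (zc hn) u := (edge_iff' hn _ _).mpr (Or.inl ⟨rfl, hu⟩)
        have h2 := hiff.mp he
        rw [edge_iff' hn] at h2
        tauto
      refine ⟨fun u => (α u.1).getD (zc hn), ?_⟩
      funext u
      by_cases h : u = zc hn
      · simp [Phi, h, h0]
      · rcases hu : α u with _ | b
        · simp [Phi, dif_neg h, hu]
        · have hb := hall u b h hu
          simp [Phi, dif_neg h, hu, hb]
    · left; right
      have hall : ∀ u b, u ≠ zc hn → α u = some b → b = zc hn := by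
        intro u b hu hub
        have hiff := hα' (zc hn) u a b h0 hub
        have he : edge (zc hn) u := (edge_iff' hn _ _).mpr (Or.inl ⟨rfl, hu⟩)
        have h2 := hiff.mp he
        rw [edge_iff' hn] at h2
        tauto
      refine ⟨(⟨a, ha⟩, fun u => (α u.1).isSome), ?_⟩
      funext u
      by_cases h : u = zc hn
      · simp [Psi, h, h0]
      · rcases hu : α u with _ | b
        · simp [Psi, dif_neg h, hu]
        · have hb := hall u b h hu
          simp [Psi, dif_neg h, hu, hb]

end Star2

section Star3
variable {n : ℕ}

lemma zc_Phi (hn : 1 ≤ n) (f : {u : Fin n // u ≠ zc hn} → Fin n) :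
    Phi hn f (zc hn) = some (zc hn) := by simp [Phi]

lemma zc_Psi (hn : 1 ≤ n) (p : {a : Fin n // a ≠ zc hn} × ({u : Fin n // u ≠ zc hn} → Bool)) :
    Psi hn p (zc hn) = some p.1.val := by simp [Psi]

lemma zc_Th (hn : 1 ≤ n) (f : {u : Fin n // u ≠ zc hn} → Bool) :
    Th hn f (zc hn) = none := by simp [Th]

lemma zc_Xi (hn : 1 ≤ n) (f : {u : Fin n // u ≠ zc hn} → Fin n) :
    Xi hn f (zc hn) = none := by simp [Xi]

lemma disj1 (hn : 1 ≤ n) : Disjoint (Set.range (Phi hn)) (Set.range (Psi hn)) := by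
  rw [Set.disjoint_left]
  rintro α ⟨f, rfl⟩ ⟨p, hp⟩
  have h2 := (congrFun hp (zc hn)).trans (zc_Phi hn f)
  rw [zc_Psi] at h2
  exact p.1.2 (Option.some_inj.mp h2)

lemma disj2 (hn : 1 ≤ n) :
    Disjoint (Set.range (Phi hn) ∪ Set.range (Psi hn))
      (Set.range (Th hn) ∪ Set.range (Xi hn)) := by
  rw [Set.disjoint_left]
  rintro α (⟨f, rfl⟩ | ⟨p, rfl⟩) h
  · rcases h with ⟨g, hg⟩ | ⟨g, hg⟩
    · have h2 := congrFun hg (zc hn); rw [zc_Th, zc_Phi] at h2; cases h2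
    · have h2 := congrFun hg (zc hn); rw [zc_Xi, zc_Phi] at h2; cases h2
  · rcases h with ⟨g, hg⟩ | ⟨g, hg⟩
    · have h2 := congrFun hg (zc hn); rw [zc_Th, zc_Psi] at h2; cases h2
    · have h2 := congrFun hg (zc hn); rw [zc_Xi, zc_Psi] at h2; cases h2

lemma inter_eq (hn : 1 ≤ n) :
    Set.range (Th hn) ∩ Set.range (Xi hn) = {fun _ => none} := by
  ext α
  simp only [Set.mem_inter_iff, Set.mem_singleton_iff]
  constructor
  · rintro ⟨⟨f, rfl⟩, ⟨g, hg⟩⟩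
    funext u
    by_cases h : u = zc hn
    · rw [h, zc_Th]
    · have h2 := congrFun hg u
      simp only [Th, Xi, dif_neg h] at h2 ⊢
      by_cases hf : f ⟨u, h⟩
      · exfalso
        rw [if_pos hf] at h2
        rcases eq_or_ne (g ⟨u, h⟩) (zc hn) with hgz | hgz
        · rw [if_pos hgz] at h2; cases h2
        · rw [if_neg hgz] at h2; exact hgz (Option.some_inj.mp h2)
      · rw [if_neg hf]
  · rintro rfl
    constructor
    · exact ⟨fun _ => false, by funext u; simp [Th]⟩
    · exact ⟨fun _ => zc hn, by funext u; simp [Xi]⟩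

lemma card_leaves (hn : 1 ≤ n) : Fintype.card {u : Fin n // u ≠ zc hn} = n - 1 := by
  simp [Fintype.card_subtype_compl]

lemma ncard_Phi (hn : 1 ≤ n) : (Set.range (Phi hn)).ncard = n ^ (n - 1) := by
  rw [← Nat.card_coe_set_eq, Nat.card_range_of_injective (Phi_inj hn),
    Nat.card_eq_fintype_card, Fintype.card_fun, card_leaves hn, Fintype.card_fin]

lemma ncard_Xi (hn : 1 ≤ n) : (Set.range (Xi hn)).ncard = n ^ (n - 1) := by
  rw [← Nat.card_coe_set_eq, Nat.card_range_of_injective (Xi_inj hn),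
    Nat.card_eq_fintype_card, Fintype.card_fun, card_leaves hn, Fintype.card_fin]

lemma ncard_Th (hn : 1 ≤ n) : (Set.range (Th hn)).ncard = 2 ^ (n - 1) := by
  rw [← Nat.card_coe_set_eq, Nat.card_range_of_injective (Th_inj hn),
    Nat.card_eq_fintype_card, Fintype.card_fun, card_leaves hn, Fintype.card_bool]

lemma ncard_Psi (hn : 1 ≤ n) : (Set.range (Psi hn)).ncard = (n - 1) * 2 ^ (n - 1) := by
  rw [← Nat.card_coe_set_eq, Nat.card_range_of_injective (Psi_inj hn),
    Nat.card_eq_fintype_card, Fintype.card_prod, Fintype.card_fun, card_leaves hn,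
    Fintype.card_bool]

end Star3

theorem stmt5 (n : ℕ) (hn : 1 ≤ n) :
    (PsEndS n).ncard = 2 * n ^ (n - 1) + n * 2 ^ (n - 1) - 1 := by
  have hset : PsEndS n = (Set.range (Phi hn) ∪ Set.range (Psi hn)) ∪
      (Set.range (Th hn) ∪ Set.range (Xi hn)) := by
    apply Set.Subset.antisymm (cover hn)
    rintro α ((⟨f, rfl⟩ | ⟨p, rfl⟩) | (⟨f, rfl⟩ | ⟨f, rfl⟩))
    · exact Phi_mem hn f
    · exact Psi_mem hn p
    · exact Th_mem hn f
    · exact Xi_mem hn f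
  have hkey := Set.ncard_union_add_ncard_inter (Set.range (Th hn)) (Set.range (Xi hn))
    (Set.toFinite _) (Set.toFinite _)
  rw [inter_eq hn, Set.ncard_singleton, ncard_Th hn, ncard_Xi hn] at hkey
  rw [hset, Set.ncard_union_eq (disj2 hn) (Set.toFinite _) (Set.toFinite _),
    Set.ncard_union_eq (disj1 hn) (Set.toFinite _) (Set.toFinite _),
    ncard_Phi hn, ncard_Psi hn]
  obtain ⟨m, rfl⟩ : ∃ m, n = m + 1 := ⟨n - 1, by omega⟩
  simp only [Nat.add_sub_cancel] at hkey ⊢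
  have hQ : 1 ≤ 2 ^ m := Nat.one_le_two_pow
  rw [show (m + 1) * 2 ^ m = m * 2 ^ m + 2 ^ m from Nat.succ_mul m (2 ^ m)]
  generalize hP : (m + 1) ^ m = P at *
  generalize hQ2 : 2 ^ m = Q at *
  generalize hR : m * Q = R at *
  omega
end

section
/- Let n ≥ 1, let S_n be the star graph on vertices {0,1,...,n-1}, and let α be a partial weak endomorphism of S_n such that 0 ∈ dom(α) or im(α) = {0} or 0 ∉ im(α). Then there exists a partial automorphism β of S_n with α = αβα. -/
/-!
Choose for every vertex `a` of `im α` a preimage `β a`, taking `β (α 0) = 0` whenever `0 ∈ dom α`;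
then `αβα = α` and `β` is injective. Every vertex of the star other than `0` is a leaf, so the only
edges between images of `β` are `{0, β a}`. If `0 ∈ dom α` and `c = α 0`, such an edge is matched by
`{c, a}`, an edge because `α` weakly maps the edge `{0, β a}`; the same fact makes all of `im α ∖ {c}`
adjacent to `c`, hence independent, as the star has no triangles. If `0 ∉ dom α`, no edge occurs
between images of `β`, and the hypothesis on `im α` says there is none in `im α` either.
-/

section PartialSection

variable {V : Type*}

def IsPSection (β α : V → Option V) : Prop := ∀ a x, β a = some x → α x = some a

theorem IsPSection.pInj {β α : V → Option V} (hβ : IsPSection β α) : PInj β := by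
  intro u v x hu hv
  simpa using (hβ u x hu).symm.trans (hβ v x hv)

theorem pmul_pmul_eq_self_of_isPSection {β α : V → Option V} (hβ : IsPSection β α)
    (hdom : ∀ a ∈ pim α, β a ≠ none) : pmul (pmul α β) α = α := by
  funext x
  cases hx : α x with
  | none => simp [pmul, hx]
  | some a =>
    obtain ⟨y, hy⟩ := Option.ne_none_iff_exists'.mp (hdom a ⟨x, hx⟩)
    simp [pmul, hx, hy, hβ a y hy]

theorem exists_isPSection_through (α : V → Option V) (z : V) :
    ∃ β : V → Option V, IsPSection β α ∧ (∀ a ∈ pim α, β a ≠ none) ∧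
      ∀ a, α z = some a → β a = some z := by
  classical
  refine ⟨fun a => if α z = some a then some z
    else if h : ∃ x, α x = some a then some h.choose else none, ?_, ?_, ?_⟩
  · intro a x hx
    by_cases hz : α z = some a
    · simp_all
    · by_cases h : ∃ x, α x = some a
      · simp only [hz, h, if_false, dite_true, Option.some.injEq] at hx
        exact hx ▸ h.choose_spec
      · simp [hz, h] at hx
  · intro a ha
    dsimp only
    split_ifs <;> simp_all [pim]
  · intro a ha
    simp [ha]

end PartialSection

section StarGraph

variable {n : ℕ} {u v w : Fin n}

theorem val_ne_zero_of_ne (hv : v.val = 0) (huv : u ≠ v) : u.val ≠ 0 := fun hu =>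
  huv (Fin.ext (hu.trans hv.symm))

theorem edge_comm : edge u v ↔ edge v u := Or.comm

theorem edge_irrefl (u : Fin n) : ¬edge u u := by
  simp [edge]

theorem not_edge_of_val_ne_zero (hu : u.val ≠ 0) (hv : v.val ≠ 0) : ¬edge u v := by
  simp [edge, hu, hv]

theorem edge_of_val_eq_zero (hu : u.val = 0) (hv : v ≠ u) : edge u v :=
  Or.inl ⟨hu, val_ne_zero_of_ne hu hv⟩

theorem not_edge_of_edge_of_edge (hv : edge u v) (hw : edge u w) : ¬edge v w := by
  simp only [edge] at *
  omega

theorem isPsEnd_of_isPSection_of_apply_zero_eq_some {α β : Fin n → Option (Fin n)}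
    {z c : Fin n} (hz : z.val = 0) (hα : IsPwEnd α) (hc : α z = some c) (hβ : IsPSection β α)
    (hβc : β c = some z) : IsPsEnd β := by
  have leaf : ∀ a x, β a = some x → x ≠ z → a ≠ c ∧ edge c a := by
    intro a x hx hxz
    have hac : a ≠ c := by
      rintro rfl
      exact hxz (Option.some.inj (hx.symm.trans hβc))
    exact ⟨hac, hα z x c a hc (hβ a x hx) (edge_of_val_eq_zero hz hxz) hac.symm⟩
  have eq_c : ∀ a, β a = some z → a = c := fun a ha =>
    Option.some.inj ((hβ a z ha).symm.trans hc)
  intro a b x y hx hy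
  by_cases hxz : x = z <;> by_cases hyz : y = z
  · subst hxz hyz
    simp only [eq_c a hx, eq_c b hy, edge_irrefl]
  · subst hxz
    rw [eq_c a hx]
    exact iff_of_true (leaf b y hy hyz).2 (edge_of_val_eq_zero hz hyz)
  · subst hyz
    rw [eq_c b hy, edge_comm, @edge_comm _ x]
    exact iff_of_true (leaf a x hx hxz).2 (edge_of_val_eq_zero hz hxz)
  · exact iff_of_false (not_edge_of_edge_of_edge (leaf a x hx hxz).2 (leaf b y hy hyz).2)
      (not_edge_of_val_ne_zero (val_ne_zero_of_ne hz hxz) (val_ne_zero_of_ne hz hyz))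

theorem isPsEnd_of_isPSection_of_apply_zero_eq_none {α β : Fin n → Option (Fin n)} {z : Fin n}
    (hz : z.val = 0) (hα : α z = none) (him : pim α = {z} ∨ z ∉ pim α)
    (hβ : IsPSection β α) : IsPsEnd β := by
  have val_ne_zero : ∀ {a x}, β a = some x → x.val ≠ 0 := fun {a x} hx =>
    val_ne_zero_of_ne hz fun hxz => by simpa [hα] using hβ a z (hxz ▸ hx)
  intro a b x y hx hy
  refine iff_of_false ?_ (not_edge_of_val_ne_zero (val_ne_zero hx) (val_ne_zero hy))
  have ha : a ∈ pim α := ⟨x, hβ a x hx⟩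
  have hb : b ∈ pim α := ⟨y, hβ b y hy⟩
  rcases him with him | hzim
  · rw [him] at ha hb
    rw [Set.mem_singleton_iff.mp ha, Set.mem_singleton_iff.mp hb]
    exact edge_irrefl z
  · exact not_edge_of_val_ne_zero (val_ne_zero_of_ne hz (ne_of_mem_of_not_mem ha hzim))
      (val_ne_zero_of_ne hz (ne_of_mem_of_not_mem hb hzim))

end StarGraph

theorem stmt11 (n : ℕ) (hn : 1 ≤ n) (α : Fin n → Option (Fin n)) (hα : α ∈ PwEndS n)
    (h : (⟨0, hn⟩ : Fin n) ∈ pdom α ∨ pim α = {(⟨0, hn⟩ : Fin n)} ∨ (⟨0, hn⟩ : Fin n) ∉ pim α) :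
    ∃ β ∈ PAutS n, pmul (pmul α β) α = α := by
  obtain ⟨β, hβ, hdom, hβz⟩ := exists_isPSection_through α ⟨0, hn⟩
  refine ⟨β, ⟨hβ.pInj, ?_⟩, pmul_pmul_eq_self_of_isPSection hβ hdom⟩
  cases hc : α ⟨0, hn⟩ with
  | some c => exact isPsEnd_of_isPSection_of_apply_zero_eq_some rfl hα hc hβ (hβz c hc)
  | none =>
    exact isPsEnd_of_isPSection_of_apply_zero_eq_none rfl hc (h.resolve_left (· hc)) hβ
end
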